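/- arXiv:2304.11789 — 5 statements merged into one kernel-verified Lean document; each statement's English description precedes it below -/
import Mathlib

section
/- Let p be a prime, k ≥ 2 with k | p−1, ψ a multiplicative character of F_p of order k, and f_k(x) = Σ_{i=1}^{k−1} ψ^i(x). Then |Σ_{x∈F_p} f_k(x)^4| ≤ 3(k−1)^3 p. -/
/-!
Expanding the fourth power writes the sum as a sum, over quadruples `(i, j, l, m)` in
`[1, k)^4`, of the character sums `∑ₓ ψ^(i+j+l+m)(x)`, each of which is `p - 1` if
`k ∣ i + j + l + m` and `0` otherwise. Given `i, j, l` at most one `m ∈ [1, k)` makes the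
exponent divisible by `k`, so the sum is a natural number at most `(k - 1)^3 (p - 1)`.
-/

open Finset Fintype

namespace MulChar

variable {R R' : Type*} [CommMonoid R] [CommRing R']

-- Nonemptiness matters: the empty product is the trivial character, which vanishes off the units.
lemma prod_apply {ι : Type*} {s : Finset ι} (hs : s.Nonempty) (χ : ι → MulChar R R') (a : R) :
    (∏ i ∈ s, χ i) a = ∏ i ∈ s, χ i a := by
  induction hs using Finset.Nonempty.cons_induction with
  | singleton i => simp
  | cons i s hi hs ih => rw [prod_cons, prod_cons, mul_apply, ih]

variable [Fintype R] [DecidableEq R] [IsDomain R']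

lemma sum_pow_apply (ψ : MulChar R R') (n : ℕ) :
    ∑ a, (ψ ^ n) a = if orderOf ψ ∣ n then (Fintype.card Rˣ : R') else 0 := by
  split_ifs with h
  · rw [orderOf_dvd_iff_pow_eq_one.mp h, sum_one_eq_card_units]
  · exact sum_eq_zero_of_ne_one fun h' => h (orderOf_dvd_of_pow_eq_one h')

theorem sum_sum_pow_apply_pow (ψ : MulChar R R') (s : Finset ℕ) {N : ℕ} (hN : N ≠ 0) :
    ∑ a, (∑ i ∈ s, (ψ ^ i) a) ^ N
      = #{e ∈ piFinset fun _ : Fin N => s | orderOf ψ ∣ ∑ j, e j} * Fintype.card Rˣ := by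
  have hprod (e : Fin N → ℕ) (a : R) : ∏ j, (ψ ^ e j) a = (ψ ^ ∑ j, e j) a := by
    have : Nonempty (Fin N) := ⟨⟨0, Nat.pos_of_ne_zero hN⟩⟩
    rw [← prod_apply univ_nonempty, prod_pow_eq_pow_sum]
  simp_rw [sum_pow', hprod]
  rw [sum_comm, natCast_card_filter, sum_mul]
  refine sum_congr rfl fun e _ => ?_
  rw [sum_pow_apply]
  split_ifs <;> simp

end MulChar

lemma card_filter_dvd_sum_le {k n : ℕ} {s : Finset ℕ} (hs : ∀ a ∈ s, a < k) :
    #{e ∈ piFinset fun _ : Fin (n + 1) => s | k ∣ ∑ j, e j} ≤ #s ^ n := by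
  rw [← card_piFinset_const]
  refine card_le_card_of_injOn Fin.init (fun e he => ?_) fun e he e' he' hinit => ?_
  · simp only [coe_filter, Set.mem_ofPred_eq, mem_piFinset] at he
    rw [mem_coe, mem_piFinset]
    exact fun j => he.1 j.castSucc
  · simp only [coe_filter, Set.mem_ofPred_eq, mem_piFinset] at he he'
    rw [Fin.sum_univ_castSucc] at he he'
    have hlast : e (Fin.last n) = e' (Fin.last n) := by
      have h := (Nat.modEq_zero_iff_dvd.2 he.2).trans (Nat.modEq_zero_iff_dvd.2 he'.2).symm
      rw [← Fin.init_def, ← Fin.init_def, hinit] at h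
      exact Nat.ModEq.eq_of_lt_of_lt (Nat.ModEq.add_left_cancel' _ h) (hs _ (he.1 _)) (hs _ (he'.1 _))
    rw [← Fin.snoc_init_self e, ← Fin.snoc_init_self e', hinit, hlast]

theorem stmt_8_general {p k : ℕ} [Fact p.Prime]
    (ψ : MulChar (ZMod p) ℂ) (hψ : orderOf ψ = k) :
    ‖∑ x : ZMod p, (∑ i ∈ Finset.Ico 1 k, (ψ ^ i) x) ^ 4‖
      ≤ 3 * ((k : ℝ) - 1) ^ 3 * p := by
  have hk : 1 ≤ k := hψ ▸ ψ.orderOf_pos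
  have hcount : #{e ∈ piFinset fun _ : Fin 4 => Ico 1 k | k ∣ ∑ j, e j} ≤ (k - 1) ^ 3 := by
    simpa using card_filter_dvd_sum_le (n := 3) (s := Ico 1 k) fun a ha => (mem_Ico.1 ha).2
  rw [ψ.sum_sum_pow_apply_pow _ four_ne_zero, ZMod.card_units_eq_totient,
    Nat.totient_prime Fact.out, hψ, ← Nat.cast_mul, Complex.norm_natCast]
  calc _ ≤ (((k - 1) ^ 3 * p : ℕ) : ℝ) := by gcongr; omega
    _ ≤ _ := by
      have : (0 : ℝ) ≤ ((k : ℝ) - 1) ^ 3 * p :=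
        mul_nonneg (pow_nonneg (sub_nonneg.2 (Nat.one_le_cast.2 hk)) 3) p.cast_nonneg
      push_cast [Nat.cast_sub hk]
      linarith

theorem stmt_8 {p k : ℕ} [Fact p.Prime] (hk : 2 ≤ k) (hkp : k ∣ p - 1)
    (ψ : MulChar (ZMod p) ℂ) (hψ : orderOf ψ = k) :
    ‖∑ x : ZMod p, (∑ i ∈ Finset.Ico 1 k, (ψ ^ i) x) ^ 4‖
      ≤ 3 * ((k : ℝ) - 1) ^ 3 * p :=
  stmt_8_general ψ hψ
end

section
/- Let p be a prime, k ≥ 2 with k | p−1, ψ a multiplicative character of F_p of order k, and f_k(x) = Σ_{i=1}^{k−1} ψ^i(x). For any nonzero y ∈ F_p, |Σ_{x∈F_p} f_k(x)^2 f_k(x+y)^2| ≤ (k−1)^2 p + ((k−1)^4 − (k−1)^2)√p. -/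
/-!
Expanding the squares, `f_k(x)^2 = ∑_{i,j} ψ^(i+j)(x)`, so the sum is a combination of
`(k-1)^4` shifted sums `∑_x χ(x) φ(x+y)`. The substitution `x = -y t` turns such a sum into
`χ(-y) φ(y) J(χ, φ)`, and a Jacobi sum has absolute value at most `√p` unless both characters
are trivial. Both are trivial only when `k ∣ i+j` and `k ∣ i'+j'`, which happens for `(k-1)^2`
of the index quadruples; these contribute at most `p` each.
-/

open Finset

section FiniteField

variable {F : Type*} [Field F] [Fintype F]

lemma norm_gaussSum_eq_sqrt_card {χ : MulChar F ℂ} (hχ : χ ≠ 1) {ψ : AddChar F ℂ}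
    (hψ : ψ.IsPrimitive) : ‖gaussSum χ ψ‖ = √(Fintype.card F) := by
  have h := gaussSum_mul_gaussSum_eq_card hχ hψ
  rw [← star_gaussSum_eq, ← starRingEnd_apply, Complex.mul_conj] at h
  rw [Complex.norm_def, show Complex.normSq (gaussSum χ ψ) = Fintype.card F by exact_mod_cast h]

end FiniteField

section ZModPrime

variable {p : ℕ} [Fact p.Prime]

lemma norm_jacobiSum_le_sqrt {χ φ : MulChar (ZMod p) ℂ} (h : χ ≠ 1 ∨ φ ≠ 1) :
    ‖jacobiSum χ φ‖ ≤ √p := by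
  have hp : p.Prime := Fact.out
  have one_le_sqrt : 1 ≤ √(p : ℝ) := Real.one_le_sqrt.mpr (by exact_mod_cast hp.one_le)
  rcases eq_or_ne χ 1 with rfl | hχ
  · rw [jacobiSum_one_nontrivial (h.resolve_left (not_not.mpr rfl)), norm_neg, norm_one]
    exact one_le_sqrt
  rcases eq_or_ne φ 1 with rfl | hφ
  · rw [jacobiSum_comm, jacobiSum_one_nontrivial hχ, norm_neg, norm_one]
    exact one_le_sqrt
  rcases eq_or_ne (χ * φ) 1 with hχφ | hχφ
  · rw [eq_inv_of_mul_eq_one_right hχφ, jacobiSum_nontrivial_inv hχ, norm_neg]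
    exact (DirichletCharacter.norm_le_one χ (-1)).trans one_le_sqrt
  have : NeZero p := ⟨hp.ne_zero⟩
  -- `g(χφ) J(χ, φ) = g(χ) g(φ)`, and primitive Gauss sums all have absolute value `√p`
  have hζ := Complex.isPrimitiveRoot_exp p hp.ne_zero
  have hψ := AddChar.zmodChar_primitive_of_primitive_root p hζ
  have key := congrArg norm (jacobiSum_mul_nontrivial hχφ (AddChar.zmodChar p hζ.pow_eq_one))
  simp only [norm_mul, norm_gaussSum_eq_sqrt_card hχφ hψ, norm_gaussSum_eq_sqrt_card hχ hψ,
    norm_gaussSum_eq_sqrt_card hφ hψ, ZMod.card] at key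
  exact (mul_left_cancel₀ (Real.sqrt_pos.mpr (by exact_mod_cast hp.pos)).ne' key).le

lemma sum_mul_apply_add_eq_jacobiSum (χ φ : MulChar (ZMod p) ℂ) {y : ZMod p} (hy : y ≠ 0) :
    ∑ x, χ x * φ (x + y) = χ (-y) * φ y * jacobiSum χ φ := by
  rw [jacobiSum, mul_sum]
  refine (Fintype.sum_bijective (-y * ·) (mulLeft_bijective₀ (-y) (neg_ne_zero.mpr hy)) _ _
    fun t => ?_).symm
  rw [show -y * t + y = y * (1 - t) by ring, map_mul χ, map_mul φ]
  ring

lemma norm_sum_mul_apply_add_le_sqrt {χ φ : MulChar (ZMod p) ℂ} (h : χ ≠ 1 ∨ φ ≠ 1)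
    {y : ZMod p} (hy : y ≠ 0) : ‖∑ x, χ x * φ (x + y)‖ ≤ √p := by
  rw [sum_mul_apply_add_eq_jacobiSum χ φ hy, norm_mul, norm_mul]
  calc ‖χ (-y)‖ * ‖φ y‖ * ‖jacobiSum χ φ‖ ≤ 1 * 1 * √p := by
        gcongr
        exacts [DirichletCharacter.norm_le_one χ _, DirichletCharacter.norm_le_one φ _,
          norm_jacobiSum_le_sqrt h]
    _ = √p := by ring

lemma norm_sum_mul_apply_add_le_card (χ φ : MulChar (ZMod p) ℂ) (y : ZMod p) :
    ‖∑ x, χ x * φ (x + y)‖ ≤ p := by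
  calc ‖∑ x, χ x * φ (x + y)‖ ≤ ∑ _x : ZMod p, (1 : ℝ) := by
        refine norm_sum_le_of_le _ fun x _ => ?_
        rw [norm_mul]
        exact mul_le_one₀ (DirichletCharacter.norm_le_one χ _) (norm_nonneg _)
          (DirichletCharacter.norm_le_one φ _)
    _ = p := by simp

end ZModPrime

lemma norm_sum_le_card_mul_add_card_mul {ι E : Type*} [SeminormedAddCommGroup E] {s : Finset ι}
    {P : ι → Prop} [DecidablePred P] {f : ι → E} {A B : ℝ}
    (hA : ∀ i ∈ s, P i → ‖f i‖ ≤ A) (hB : ∀ i ∈ s, ¬P i → ‖f i‖ ≤ B) :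
    ‖∑ i ∈ s, f i‖ ≤ #{i ∈ s | P i} * A + #{i ∈ s | ¬P i} * B := by
  rw [← sum_filter_add_sum_filter_not s P]
  refine (norm_add_le _ _).trans (add_le_add ?_ ?_) <;>
  refine (norm_sum_le _ _).trans
    ((sum_le_card_nsmul _ _ _ fun i hi => ?_).trans (nsmul_eq_mul _ _).le)
  · exact hA i (mem_filter.mp hi).1 (mem_filter.mp hi).2
  · exact hB i (mem_filter.mp hi).1 (mem_filter.mp hi).2

lemma card_filter_dvd_add_Ico (k : ℕ) : #{q ∈ Ico 1 k ×ˢ Ico 1 k | k ∣ q.1 + q.2} = k - 1 := by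
  have : {q ∈ Ico 1 k ×ˢ Ico 1 k | k ∣ q.1 + q.2} =
      (Ico 1 k).image fun i => (i, k - i) := by
    ext ⟨i, j⟩
    simp only [mem_filter, mem_product, mem_Ico, mem_image, Prod.mk.injEq]
    constructor
    · rintro ⟨⟨⟨hi, hik⟩, hj, hjk⟩, hdvd⟩
      have := Nat.eq_of_dvd_of_lt_two_mul (by omega) hdvd (by omega)
      exact ⟨i, ⟨hi, hik⟩, rfl, by omega⟩
    · rintro ⟨i, ⟨hi, hik⟩, rfl, rfl⟩
      exact ⟨⟨⟨hi, hik⟩, by omega, by omega⟩, ⟨1, by omega⟩⟩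
  rw [this, card_image_of_injective _ fun i j h => congrArg Prod.fst h, Nat.card_Ico]

lemma sq_sum_pow_apply {R R' : Type*} [CommMonoid R] [CommRing R'] (ψ : MulChar R R')
    (s : Finset ℕ) (x : R) : (∑ i ∈ s, (ψ ^ i) x) ^ 2 = ∑ q ∈ s ×ˢ s, (ψ ^ (q.1 + q.2)) x := by
  simp only [sq, sum_mul_sum, sum_product, pow_add, MulChar.mul_apply]

theorem stmt_9_general {p k : ℕ} [Fact p.Prime] (hk : 2 ≤ k)
    (ψ : MulChar (ZMod p) ℂ) (hψ : orderOf ψ = k) (y : ZMod p) (hy : y ≠ 0) :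
    ‖(∑ x : ZMod p,
        (∑ i ∈ Finset.Ico 1 k, (ψ ^ i) x) ^ 2 * (∑ i ∈ Finset.Ico 1 k, (ψ ^ i) (x + y)) ^ 2)‖
      ≤ ((k : ℝ) - 1) ^ 2 * p + (((k : ℝ) - 1) ^ 4 - ((k : ℝ) - 1) ^ 2) * Real.sqrt p := by
  set P := Ico 1 k ×ˢ Ico 1 k
  have expand : ∑ x, (∑ i ∈ Ico 1 k, (ψ ^ i) x) ^ 2 * (∑ i ∈ Ico 1 k, (ψ ^ i) (x + y)) ^ 2 =
      ∑ Q ∈ P ×ˢ P, ∑ x, (ψ ^ (Q.1.1 + Q.1.2)) x * (ψ ^ (Q.2.1 + Q.2.2)) (x + y) := by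
    simp only [sq_sum_pow_apply, sum_mul_sum]
    rw [sum_comm, sum_product (s := P) (t := P)]
    exact sum_congr rfl fun _ _ => sum_comm
  set good : (ℕ × ℕ) × (ℕ × ℕ) → Prop := fun Q => k ∣ Q.1.1 + Q.1.2 ∧ k ∣ Q.2.1 + Q.2.2
  have hk1 : ((k - 1 : ℕ) : ℝ) = k - 1 := Nat.cast_pred (by omega)
  have card_good : #{Q ∈ P ×ˢ P | good Q} = (k - 1) ^ 2 := by
    rw [filter_product (s := P) (t := P) (fun q : ℕ × ℕ => k ∣ q.1 + q.2)
      (fun q => k ∣ q.1 + q.2), card_product, card_filter_dvd_add_Ico, sq]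
  have card_bad : (#{Q ∈ P ×ˢ P | ¬good Q} : ℝ) = ((k : ℝ) - 1) ^ 4 - ((k : ℝ) - 1) ^ 2 := by
    have h : ((#{Q ∈ P ×ˢ P | good Q} + #{Q ∈ P ×ˢ P | ¬good Q} : ℕ) : ℝ) = #(P ×ˢ P) := by
      exact_mod_cast card_filter_add_card_filter_not good
    simp only [card_good, P, card_product, Nat.card_Ico, Nat.cast_add, Nat.cast_mul, Nat.cast_pow,
      hk1] at h
    linear_combination h
  rw [expand]
  refine (norm_sum_le_card_mul_add_card_mul (P := good) (A := p) (B := √p)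
    (fun Q _ _ => norm_sum_mul_apply_add_le_card _ _ y) fun Q _ hQ => ?_).trans_eq ?_
  · refine norm_sum_mul_apply_add_le_sqrt ?_ hy
    rw [Ne, Ne, ← orderOf_dvd_iff_pow_eq_one, ← orderOf_dvd_iff_pow_eq_one, hψ]
    exact not_and_or.mp hQ
  · rw [card_good, card_bad, Nat.cast_pow, hk1]

theorem stmt_9 {p k : ℕ} [Fact p.Prime] (hk : 2 ≤ k) (hkp : k ∣ p - 1)
    (ψ : MulChar (ZMod p) ℂ) (hψ : orderOf ψ = k) (y : ZMod p) (hy : y ≠ 0) :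
    ‖(∑ x : ZMod p,
        (∑ i ∈ Finset.Ico 1 k, (ψ ^ i) x) ^ 2 * (∑ i ∈ Finset.Ico 1 k, (ψ ^ i) (x + y)) ^ 2)‖
      ≤ ((k : ℝ) - 1) ^ 2 * p + (((k : ℝ) - 1) ^ 4 - ((k : ℝ) - 1) ^ 2) * Real.sqrt p :=
  stmt_9_general hk ψ hψ y hy
end

section
/- For any prime p and any finite subsets A, B, C ⊆ F_p, |A + B + C|² ≤ |A + B| · |B + C| · |C + A|. -/
open Finset Pointwise

private lemma gmr_numeric (x y z s d da db : ℕ) (h1 : s ^ 2 ≤ x * y * z)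
    (h2 : d ≤ x) (h3 : d ≤ da * db) :
    (d + s) ^ 2 ≤ x * (y + db) * (z + da) := by
  zify at h1 h2 h3 ⊢
  have hx : (0 : ℤ) ≤ x := by positivity
  have hy : (0 : ℤ) ≤ y := by positivity
  have hz : (0 : ℤ) ≤ z := by positivity
  have hs : (0 : ℤ) ≤ s := by positivity
  have hd : (0 : ℤ) ≤ d := by positivity
  have hda : (0 : ℤ) ≤ da := by positivity
  have hdb : (0 : ℤ) ≤ db := by positivity
  have hd2 : (d : ℤ) ^ 2 ≤ x * (da * db) := by nlinarith
  have h4 : (2 * (s : ℤ) * d) ^ 2 ≤ (x * (y * da) + x * (z * db)) ^ 2 := by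
    have t1 : (s : ℤ) ^ 2 * d ^ 2 ≤ (x * y * z) * (x * (da * db)) :=
      mul_le_mul h1 hd2 (by positivity) (by positivity)
    nlinarith [sq_nonneg ((x : ℤ) * (y * da) - x * (z * db))]
  have h5 : 2 * (s : ℤ) * d ≤ x * (y * da) + x * (z * db) := by
    have hl : (0 : ℤ) ≤ 2 * s * d := by positivity
    have hr : (0 : ℤ) ≤ x * (y * da) + x * (z * db) := by positivity
    exact (pow_le_pow_iff_left₀ hl hr two_ne_zero).1 h4
  nlinarith [h1, hd2, h5]

private lemma gmr {G : Type*} [AddCommGroup G] [DecidableEq G] (A B C : Finset G) :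
    (A + B + C).card ^ 2 ≤ (A + B).card * (B + C).card * (C + A).card := by
  induction C using Finset.induction_on with
  | empty => simp
  | @insert c C' hc ih =>
    classical
    set A₁ : Finset G := A.filter (fun a => a + c ∉ A + C') with hA₁
    set B₁ : Finset G := B.filter (fun b => b + c ∉ B + C') with hB₁
    set D : Finset G := (A + B + {c}) \ (A + B + C') with hD
    -- cardinality of the new sumset
    have hsplit : A + B + insert c C' = (A + B + {c}) ∪ (A + B + C') := by
      rw [Finset.insert_eq, Finset.add_union]
    have hcard : (A + B + insert c C').card = D.card + (A + B + C').card := by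
      rw [hsplit, ← Finset.card_sdiff_add_card]
    -- D is small
    have hDsub : D ⊆ A₁ + B₁ + {c} := by
      intro x hx
      rw [hD, Finset.mem_sdiff] at hx
      obtain ⟨hx1, hx2⟩ := hx
      rw [Finset.mem_add] at hx1
      obtain ⟨y, hy, z, hz, hyz⟩ := hx1
      rw [Finset.mem_singleton] at hz
      rw [hz] at hyz
      rw [Finset.mem_add] at hy
      obtain ⟨a, ha, b, hb, hab⟩ := hy
      have ha1 : a ∈ A₁ := by
        rw [hA₁, Finset.mem_filter]
        refine ⟨ha, fun hmem => hx2 ?_⟩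
        rw [Finset.mem_add] at hmem
        obtain ⟨a', ha', c', hc', hac⟩ := hmem
        have : x = (a' + b) + c' := by
          rw [← hyz, ← hab]
          calc a + b + c = b + (a + c) := by abel
            _ = b + (a' + c') := by rw [hac]
            _ = a' + b + c' := by abel
        rw [this]
        exact Finset.add_mem_add (Finset.add_mem_add ha' hb) hc'
      have hb1 : b ∈ B₁ := by
        rw [hB₁, Finset.mem_filter]
        refine ⟨hb, fun hmem => hx2 ?_⟩
        rw [Finset.mem_add] at hmem
        obtain ⟨b', hb', c', hc', hbc⟩ := hmem
        have : x = (a + b') + c' := by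
          rw [← hyz, ← hab]
          calc a + b + c = a + (b + c) := by abel
            _ = a + (b' + c') := by rw [hbc]
            _ = a + b' + c' := by abel
        rw [this]
        exact Finset.add_mem_add (Finset.add_mem_add ha hb') hc'
      have : x = (a + b) + c := by rw [← hyz, ← hab]
      rw [this]
      exact Finset.add_mem_add (Finset.add_mem_add ha1 hb1) (Finset.mem_singleton_self c)
    have hDle1 : D.card ≤ (A + B).card := by
      calc D.card ≤ (A + B + {c}).card := Finset.card_le_card (by rw [hD]; exact Finset.sdiff_subset)
        _ = (A + B).card := Finset.card_add_singleton _ _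
    have hDle2 : D.card ≤ A₁.card * B₁.card := by
      calc D.card ≤ (A₁ + B₁ + {c}).card := Finset.card_le_card hDsub
        _ = (A₁ + B₁).card := Finset.card_add_singleton _ _
        _ ≤ A₁.card * B₁.card := Finset.card_add_le
    -- growth of the two side sumsets
    have hgrow : ∀ (X : Finset G) (X₁ : Finset G), X₁ = X.filter (fun a => a + c ∉ X + C') →
        (X + C').card + X₁.card ≤ (X + insert c C').card := by
      intro X X₁ hX₁
      have hsub : (X + C') ∪ (X₁ + {c}) ⊆ X + insert c C' := by
        rw [Finset.insert_eq, Finset.add_union]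
        apply Finset.union_subset
        · exact Finset.subset_union_right
        · refine Finset.Subset.trans (Finset.add_subset_add_right ?_) Finset.subset_union_left
          rw [hX₁]; exact Finset.filter_subset _ _
      have hdisj : Disjoint (X + C') (X₁ + {c}) := by
        rw [Finset.disjoint_right]
        intro u hu hu'
        rw [Finset.mem_add] at hu
        obtain ⟨a, ha, z, hz, rfl⟩ := hu
        rw [Finset.mem_singleton] at hz
        rw [hX₁, Finset.mem_filter] at ha
        rw [hz] at hu'
        exact ha.2 hu'
      calc (X + C').card + X₁.card
          = (X + C').card + (X₁ + {c}).card := by rw [Finset.card_add_singleton]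
        _ = ((X + C') ∪ (X₁ + {c})).card := (Finset.card_union_of_disjoint hdisj).symm
        _ ≤ (X + insert c C').card := Finset.card_le_card hsub
    have hgrowB : (B + C').card + B₁.card ≤ (B + insert c C').card := hgrow B B₁ hB₁
    have hgrowA : (A + C').card + A₁.card ≤ (A + insert c C').card := hgrow A A₁ hA₁
    -- assemble
    have ihA : (A + B + C').card ^ 2 ≤ (A + B).card * (B + C').card * (A + C').card := by
      rwa [add_comm C' A] at ih
    have key : (D.card + (A + B + C').card) ^ 2 ≤
        (A + B).card * ((B + C').card + B₁.card) * ((A + C').card + A₁.card) :=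
      gmr_numeric _ _ _ _ _ _ _ ihA hDle1 hDle2
    rw [hcard]
    calc (D.card + (A + B + C').card) ^ 2
        ≤ (A + B).card * ((B + C').card + B₁.card) * ((A + C').card + A₁.card) := key
      _ ≤ (A + B).card * (B + insert c C').card * (insert c C' + A).card := by
          rw [add_comm (insert c C') A]
          exact Nat.mul_le_mul (Nat.mul_le_mul_left _ hgrowB) hgrowA

theorem stmt_12 {p : ℕ} [Fact p.Prime] (A B C : Finset (ZMod p)) :
    (A + B + C).card ^ 2 ≤ (A + B).card * (B + C).card * (C + A).card :=
  gmr A B C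
end

section
/- Let k ≥ 2 and let p ≡ 1 (mod k) be a prime with p > 16k². Suppose D_k = A + B with 0 ∈ B and |B| ≥ 2. Then A ⊆ D_k, and for every x ∈ D_k and every nonzero t with {0,t} ⊆ B, at least one of x + t, x − t lies in D_k ∪ {0} — more precisely, if B = {0, t}, then for every x ∈ D_k either x + t ∈ D_k or x − t ∈ D_k. -/
open Finset Pointwise

theorem stmt_17 {p k : ℕ} [Fact p.Prime] (hk : 2 ≤ k) (hkp : k ∣ p - 1)
    (hp : p > 16 * k ^ 2) (A B : Finset (ZMod p)) (t : ZMod p) (ht : t ≠ 0)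
    (hB : B = {0, t})
    (hAB : A + B = Finset.univ.filter fun x : ZMod p => ∃ y : ZMod p, y ≠ 0 ∧ y ^ k = x) :
    (∀ a ∈ A, ∃ y : ZMod p, y ≠ 0 ∧ y ^ k = a) ∧
      (∀ x : ZMod p, (∃ y : ZMod p, y ≠ 0 ∧ y ^ k = x) →
        (∃ y : ZMod p, y ≠ 0 ∧ y ^ k = x + t) ∨ (∃ y : ZMod p, y ≠ 0 ∧ y ^ k = x - t)) := by
  subst hB
  have hmem : ∀ z : ZMod p,
      z ∈ A + ({0, t} : Finset (ZMod p)) ↔ ∃ y : ZMod p, y ≠ 0 ∧ y ^ k = z := by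
    intro z
    rw [hAB, mem_filter]
    simp
  have hAsub : ∀ a ∈ A, ∃ y : ZMod p, y ≠ 0 ∧ y ^ k = a := by
    intro a ha
    have h0 : (0 : ZMod p) ∈ ({0, t} : Finset (ZMod p)) := by simp
    have := add_mem_add ha h0
    rw [add_zero] at this
    exact (hmem a).1 this
  refine ⟨hAsub, ?_⟩
  intro x hx
  have hx' : x ∈ A + ({0, t} : Finset (ZMod p)) := (hmem x).2 hx
  rw [Finset.mem_add] at hx'
  obtain ⟨a, ha, b, hb, hab⟩ := hx'
  simp only [mem_insert, mem_singleton] at hb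
  rcases hb with rfl | rfl
  · left
    rw [add_zero] at hab
    subst hab
    have htm : t ∈ ({0, t} : Finset (ZMod p)) := by simp
    have := add_mem_add ha htm
    exact (hmem (a + t)).1 this
  · right
    have h := eq_sub_of_add_eq hab
    rw [← h]
    exact hAsub _ ha
end

section
/- Let a, k, p be real numbers with k ≥ 2, p > 42²k²(3k+8)², a ≥ 18, and suppose 3k√p·a² − (p−1)a + 8p + 3k√p ≥ 0. Then a ≥ √p/(6k). -/
theorem stmt_19 (a k p : ℝ) (hk : 2 ≤ k) (hp : p > 42 ^ 2 * k ^ 2 * (3 * k + 8) ^ 2)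
    (ha : 18 ≤ a)
    (hq : 3 * k * Real.sqrt p * a ^ 2 - (p - 1) * a + 8 * p + 3 * k * Real.sqrt p ≥ 0) :
    a ≥ Real.sqrt p / (6 * k) := by
  set s := Real.sqrt p with hs
  have hk0 : (0:ℝ) < k := by linarith
  have hp0 : (0:ℝ) < p := by nlinarith
  have hs0 : 0 ≤ s := Real.sqrt_nonneg p
  have hs2 : s ^ 2 = p := Real.sq_sqrt hp0.le
  have hsb : 42 * k * (3 * k + 8) < s := by
    have h : (42 * k * (3 * k + 8)) ^ 2 < s ^ 2 := by rw [hs2]; nlinarith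
    nlinarith [hs0, hk0]
  by_contra h
  push_neg at h
  have h6 : 6 * k * a < s := by
    have := (lt_div_iff₀ (by positivity : (0:ℝ) < 6 * k)).mp h
    linarith
  have hsa : (0:ℝ) < s * a := by positivity
  have h1 : 3 * k * s * a ^ 2 < p / 2 * a := by
    nlinarith [mul_lt_mul_of_pos_right h6 hsa, hs2]
  have hps : 3 * k * s + 18 ≤ p := by nlinarith [hs2, hsb, hk0]
  have h2 : 8 * p + 3 * k * s ≤ (p / 2 - 1) * a := by nlinarith
  linarith
end
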